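/- In the star network setting, letting λ_{j,θ} denote the (unique) Lagrange multipliers satisfying the KKT conditions at θ and σ_θ := Σ_{j=1}^J λ_{j,θ}, the functions θ ↦ λ_{j,θ} (for each j) and θ ↦ σ_θ are piecewise linear on [0,∞): for each such function f there exist finitely many points 0 = t_0 < t_1 < ⋯ < t_m such that f is affine on each interval [t_i, t_{i+1}] and on [t_m, ∞). -/

import Mathlib

/-- The star network setting of Abhishek–Hajek. -/
structure StarSetting where
  /-- number of arms -/
  J : ℕ
  hJ : 0 < J
  /-- number of leaf items on arm `j` -/
  n : Fin J → ℕ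
  hn : ∀ j, 0 < n j
  /-- winning single-item bids -/
  b : (j : Fin J) → Fin (n j) → ℝ
  /-- losing single-item bids -/
  bl : (j : Fin J) → Fin (n j) → ℝ
  /-- losing single-item bid for item zero -/
  bl0 : ℝ
  /-- package bids -/
  C : Fin J → ℝ
  h_bid : ∀ j k, bl j k ≤ b j k
  h_pos : ∀ j, ∃ k, bl j k < b j k

namespace StarSetting

/-- Index of items (= winning buyers): `none` is item zero, `some ⟨j,k⟩` is item `(j,k)`. -/
abbrev Idx (S : StarSetting) := Option ((j : Fin S.J) × Fin (S.n j))

variable (S : StarSetting)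

noncomputable def Δ (j : Fin S.J) (k : Fin (S.n j)) : ℝ := S.b j k - S.bl j k

noncomputable def Δmax (j : Fin S.J) : ℝ :=
  Finset.univ.sup' ⟨⟨0, S.hn j⟩, Finset.mem_univ _⟩ (S.Δ j)

noncomputable def v0 : ℝ :=
  max S.bl0 (Finset.univ.sup' ⟨⟨0, S.hJ⟩, Finset.mem_univ _⟩
    fun j => S.C j - ∑ k, S.b j k)

noncomputable def η (j : Fin S.J) : ℝ := S.v0 + (∑ k, S.b j k) - S.C j

/-- The Vikrey price vector `v_θ`. -/
noncomputable def vick (θ : ℝ) : EuclideanSpace ℝ S.Idx :=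
  WithLp.toLp 2 fun i : S.Idx => Option.elim i S.v0 fun jk => max (S.b jk.1 jk.2 - S.η jk.1 - θ) (S.bl jk.1 jk.2)

/-- The core region `K_θ`. -/
def coreK (θ : ℝ) : Set (EuclideanSpace ℝ S.Idx) :=
  { p | (∀ j, S.C j ≤ p none + ∑ k, p (some ⟨j, k⟩)) ∧
        (∀ j k, S.bl j k ≤ p (some ⟨j, k⟩) ∧ p (some ⟨j, k⟩) ≤ S.b j k) ∧
        S.v0 ≤ p none ∧ p none ≤ S.v0 + θ }

/-- The expanded core region (IR constraint of buyer zero dropped). -/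
def expandedK : Set (EuclideanSpace ℝ S.Idx) :=
  { p | (∀ j, S.C j ≤ p none + ∑ k, p (some ⟨j, k⟩)) ∧
        (∀ j k, S.bl j k ≤ p (some ⟨j, k⟩) ∧ p (some ⟨j, k⟩) ≤ S.b j k) ∧
        S.v0 ≤ p none }

/-- The KKT conditions at `θ` for the projection onto the expanded core. -/
def KKT (θ : ℝ) (p : EuclideanSpace ℝ S.Idx) (lam : Fin S.J → ℝ) : Prop :=
  (∀ j, 0 ≤ lam j) ∧
  p none = S.v0 + ∑ j, lam j ∧
  (∀ j k, p (some ⟨j, k⟩) = min (S.vick θ (some ⟨j, k⟩) + lam j) (S.b j k)) ∧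
  (∀ j, ∑ k, max (min (S.η j + θ) (S.Δ j k) - lam j) 0 ≤ (∑ i, lam i) + S.η j) ∧
  (∀ j, 0 < lam j → (∑ i, lam i) + S.η j = ∑ k, max (min (S.η j + θ) (S.Δ j k) - lam j) 0)

/-- The seller's revenue for a winner price vector. -/
noncomputable def revenue (p : EuclideanSpace ℝ S.Idx) : ℝ :=
  p none + ∑ j, ∑ k, p (some ⟨j, k⟩)

/-- The minimum revenue core at `θ`. -/
def MRC (θ : ℝ) : Set (EuclideanSpace ℝ S.Idx) :=
  { p | p ∈ S.coreK θ ∧ ∀ q ∈ S.coreK θ, S.revenue p ≤ S.revenue q }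

end StarSetting

/-- `q` is a point of `A` nearest to `v` (Euclidean projection of `v` onto `A`). -/
def IsProjOn {E : Type*} [NormedAddCommGroup E] (A : Set E) (v q : E) : Prop :=
  q ∈ A ∧ ∀ r ∈ A, dist v q ≤ dist v r

/-- `f` is piecewise linear on `[0, ∞)`: there are finitely many breakpoints
`0 = t 0 < t 1 < ⋯ < t m` such that `f` is affine on each `[t i, t (i+1)]` and on `[t m, ∞)`. -/
def PiecewiseLinearOnIci (f : ℝ → ℝ) : Prop :=
  ∃ m : ℕ, ∃ t : Fin (m + 1) → ℝ, t 0 = 0 ∧ StrictMono t ∧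
    (∀ i : Fin m, ∃ a c : ℝ, ∀ x ∈ Set.Icc (t i.castSucc) (t i.succ), f x = a * x + c) ∧
    (∃ a c : ℝ, ∀ x ∈ Set.Ici (t (Fin.last m)), f x = a * x + c)

/-!
Both claims follow from two facts about `θ ↦ λ_θ` on `[0, ∞)`.

It is continuous, indeed `(∑ n_j)`-Lipschitz for the sup norm: `λ_θ` solves the complementarity
system `λ ≥ 0`, `F_{j,θ}(λ_j) - η_j ≤ ∑ λ` with equality where `λ_j > 0`, where
`F_{j,θ}(x) = ∑_k (min (η_j + θ) Δ_{j,k} - x)⁺` grows with `θ` at rate at most `n_j` and, where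
positive, decreases in `x` with slope at least `1`. Comparing the systems at `θ ≤ θ'` first
bounds the change of `∑ λ`, then that of each `λ_j`.

Its values lie on finitely many lines: once one knows which summands of `F_{j,θ}(λ_j)` are
positive and which of them are capped at `η_j + θ` (finitely many patterns), the KKT equalities
become a linear system in `λ` whose solution is affine in `θ`.

A continuous function on `[0, ∞)` whose graph lies on finitely many lines is piecewise linear,
with breakpoints among the pairwise crossings of the lines: between two consecutive crossings
the lines are disjoint, so by connectedness the graph follows just one of them.
-/

section PiecewiseLinear

open Set

theorem IsPreconnected.exists_eqOn_of_finite {X Y ι : Type*} [TopologicalSpace X]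
    [TopologicalSpace Y] [T2Space Y] {s : Set X} (hs : IsPreconnected s) (hne : s.Nonempty)
    {f : X → Y} (hf : ContinuousOn f s) {P : Set ι} (hP : P.Finite) {g : ι → X → Y}
    (hg : ∀ i ∈ P, ContinuousOn (g i) s) (hfg : ∀ x ∈ s, ∃ i ∈ P, f x = g i x)
    (hdisj : ∀ i ∈ P, ∀ i' ∈ P, ∀ x ∈ s, g i x = g i' x → i = i') :
    ∃ i ∈ P, EqOn f (g i) s := by
  have := isPreconnected_iff_preconnectedSpace.mp hs
  let E : ι → Set s := fun i => {x | f x = g i x}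
  have hclosed : ∀ i ∈ P, IsClosed (E i) := fun i hi =>
    isClosed_eq hf.domRestrict (hg i hi).domRestrict
  obtain ⟨x₀, hx₀⟩ := hne
  obtain ⟨i₀, hi₀, hfx₀⟩ := hfg x₀ hx₀
  have hcompl : (E i₀)ᶜ = ⋃ i ∈ P \ {i₀}, E i := by
    ext x
    simp only [mem_compl_iff, mem_iUnion, mem_sdiff, mem_singleton_iff, exists_prop]
    constructor
    · intro hx
      obtain ⟨i, hi, hfx⟩ := hfg x x.2
      exact ⟨i, ⟨hi, by rintro rfl; exact hx hfx⟩, hfx⟩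
    · rintro ⟨i, ⟨hi, hne⟩, hfx⟩ hfx'
      exact hne (hdisj i hi i₀ hi₀ x x.2 (hfx.symm.trans hfx'))
  have hclopen : IsClopen (E i₀) :=
    ⟨hclosed i₀ hi₀, by
      rw [← isClosed_compl_iff, hcompl]
      exact hP.sdiff.isClosed_biUnion fun i hi => hclosed i hi.1⟩
  have huniv := hclopen.eq_univ ⟨⟨x₀, hx₀⟩, hfx₀⟩
  exact ⟨i₀, hi₀, fun x hx => (huniv ▸ mem_univ (⟨x, hx⟩ : s) : (⟨x, hx⟩ : s) ∈ E i₀)⟩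

theorem eq_div_of_line_eq {q q' : ℝ × ℝ} (hne : q ≠ q') {x : ℝ}
    (h : q.1 * x + q.2 = q'.1 * x + q'.2) : x = (q'.2 - q.2) / (q.1 - q'.1) := by
  have hslope : q.1 - q'.1 ≠ 0 := fun h' =>
    hne (Prod.ext (sub_eq_zero.mp h') (by rw [sub_eq_zero.mp h'] at h; linarith))
  rw [eq_div_iff hslope]
  linarith

theorem exists_eqOn_closure_of_finite_lines {f : ℝ → ℝ} {s : Set ℝ} (hs : IsPreconnected s)
    (hne : s.Nonempty) (hf : ContinuousOn f (closure s)) {P : Set (ℝ × ℝ)} (hP : P.Finite)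
    (hfP : ∀ x ∈ s, ∃ q ∈ P, f x = q.1 * x + q.2)
    (hdisj : ∀ q ∈ P, ∀ q' ∈ P, ∀ x ∈ s, q.1 * x + q.2 = q'.1 * x + q'.2 → q = q') :
    ∃ a c : ℝ, ∀ x ∈ closure s, f x = a * x + c := by
  obtain ⟨q, -, hq⟩ := hs.exists_eqOn_of_finite hne (hf.mono subset_closure) hP
    (g := fun q x => q.1 * x + q.2) (fun _ _ => by fun_prop) hfP hdisj
  exact ⟨q.1, q.2, hq.of_subset_closure hf (by fun_prop) subset_closure subset_rfl⟩

theorem exists_strictMono_fin_range_eq {α : Type*} [LinearOrder α] {T : Set α} (hT : T.Finite)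
    {a : α} (ha : IsLeast T a) :
    ∃ (m : ℕ) (t : Fin (m + 1) → α), t 0 = a ∧ StrictMono t ∧ range t = T := by
  have hcard : hT.toFinset.card = hT.toFinset.card - 1 + 1 :=
    (Nat.sub_add_cancel (Finset.card_pos.mpr ⟨a, hT.mem_toFinset.mpr ha.1⟩)).symm
  set t := hT.toFinset.orderEmbOfFin hcard
  have hrange : range t = T := by simp [t, Finset.range_orderEmbOfFin]
  obtain ⟨k, hk⟩ : a ∈ range t := hrange.symm ▸ ha.1
  refine ⟨_, t, le_antisymm ?_ (ha.2 ?_), t.strictMono, hrange⟩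
  · exact hk ▸ t.monotone (Fin.zero_le k)
  · exact hrange.subset (mem_range_self 0)

theorem PiecewiseLinearOnIci.of_finite_lines {f : ℝ → ℝ} (hf : ContinuousOn f (Ici 0))
    {P : Set (ℝ × ℝ)} (hP : P.Finite) (hfP : ∀ x, 0 ≤ x → ∃ q ∈ P, f x = q.1 * x + q.2) :
    PiecewiseLinearOnIci f := by
  set T : Set ℝ :=
    insert 0 ((fun qq : (ℝ × ℝ) × (ℝ × ℝ) => (qq.2.2 - qq.1.2) / (qq.1.1 - qq.2.1)) '' P ×ˢ P)
      ∩ Ici 0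
  have hT : T.Finite := (((hP.prod hP).image _).insert 0).inter_of_left _
  obtain ⟨m, t, ht0, hmono, hrange⟩ :=
    exists_strictMono_fin_range_eq hT ⟨⟨mem_insert 0 _, mem_Ici.mpr le_rfl⟩, fun x hx => hx.2⟩
  have ht_nonneg : ∀ i, 0 ≤ t i := fun i => ht0 ▸ hmono.monotone (Fin.zero_le i)
  have hpiece : ∀ s : Set ℝ, IsPreconnected s → s.Nonempty → s ⊆ Ici 0 → Disjoint s (range t) →
      ∃ a c : ℝ, ∀ x ∈ closure s, f x = a * x + c := by
    intro s hs hne hs0 hdisj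
    refine exists_eqOn_closure_of_finite_lines hs hne
      (hf.mono (closure_minimal hs0 isClosed_Ici)) hP (fun x hx => hfP x (hs0 hx))
      fun q hq q' hq' x hx hqq' => ?_
    by_contra hne
    refine disjoint_left.mp hdisj hx (hrange ▸ ⟨mem_insert_of_mem _ ?_, hs0 hx⟩)
    exact ⟨(q, q'), ⟨hq, hq'⟩, (eq_div_of_line_eq hne hqq').symm⟩
  refine ⟨m, t, ht0, hmono, fun i => ?_, ?_⟩
  · have hlt : t i.castSucc < t i.succ := hmono Fin.castSucc_lt_succ
    simpa [closure_Ioo hlt.ne] using hpiece (Ioo (t i.castSucc) (t i.succ)) isPreconnected_Ioo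
      (nonempty_Ioo.mpr hlt) (fun x hx => (ht_nonneg _).trans hx.1.le) <| by
        rw [disjoint_left]
        rintro x ⟨hx₁, hx₂⟩ ⟨k, rfl⟩
        exact not_lt.mpr (Fin.castSucc_lt_iff_succ_le.mp (hmono.lt_iff_lt.mp hx₁))
          (hmono.lt_iff_lt.mp hx₂)
  · simpa [closure_Ioi] using hpiece (Ioi (t (Fin.last m))) isPreconnected_Ioi nonempty_Ioi
      (fun x hx => (ht_nonneg _).trans hx.le) <| by
        rw [disjoint_left]
        rintro x hx ⟨k, rfl⟩
        exact not_lt.mpr (hmono.monotone (Fin.le_last k)) hx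

theorem PiecewiseLinearOnIci.comp_of_finite_affine {E : Type*} [AddCommGroup E] [Module ℝ E]
    [TopologicalSpace E] {g : ℝ → E} (hg : ContinuousOn g (Ici 0)) {L : Set (E × E)}
    (hL : L.Finite) (hgL : ∀ x, 0 ≤ x → ∃ uv ∈ L, g x = x • uv.1 + uv.2) (φ : E →L[ℝ] ℝ) :
    PiecewiseLinearOnIci (φ ∘ g) := by
  refine of_finite_lines (φ.continuous.comp_continuousOn hg)
    (hL.image fun uv => (φ uv.1, φ uv.2)) fun x hx => ?_
  obtain ⟨uv, huv, hgx⟩ := hgL x hx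
  exact ⟨_, mem_image_of_mem _ huv, by simp [hgx, mul_comm]⟩

end PiecewiseLinear

section Complementarity

open Finset

variable {ι : Type*} [Fintype ι]

def SolvesComplementarity (G : ι → ℝ → ℝ) (l : ι → ℝ) : Prop :=
  (∀ j, 0 ≤ l j) ∧ (∀ j, G j (l j) ≤ ∑ i, l i) ∧ ∀ j, 0 < l j → G j (l j) = ∑ i, l i

namespace SolvesComplementarity

variable {G G' : ι → ℝ → ℝ} {l l' : ι → ℝ} {c : ℝ}

theorem sub_le_of_lt (hl : SolvesComplementarity G l) (hl' : SolvesComplementarity G' l')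
    (hG : ∀ j x y, y ≤ x → 0 < G j x → G j x + (x - y) ≤ G j y)
    (hGG' : ∀ j x, G j x ≤ G' j x + c) {j : ι} (hj : l' j < l j) :
    l j - l' j ≤ ∑ i, l' i - ∑ i, l i + c := by
  have hpos : 0 < l j := (hl'.1 j).trans_lt hj
  have hGj : G j (l j) = ∑ i, l i := hl.2.2 j hpos
  have hle_sum : l j ≤ ∑ i, l i := single_le_sum (fun i _ => hl.1 i) (mem_univ j)
  have hsteep := hG j (l j) (l' j) hj.le (by linarith)
  linarith [hGG' j (l' j), hl'.2.1 j]

theorem sum_le (hl : SolvesComplementarity G l) (hl' : SolvesComplementarity G' l')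
    (hG : ∀ j x y, y ≤ x → 0 < G j x → G j x + (x - y) ≤ G j y)
    (hGG' : ∀ j x, G j x ≤ G' j x + c) (hc : 0 ≤ c) :
    ∑ i, l i ≤ ∑ i, l' i + c := by
  by_contra! hlt
  have hle : ∀ j, l j ≤ l' j := fun j => by
    by_contra! hj
    linarith [hl.sub_le_of_lt hl' hG hGG' hj]
  linarith [sum_le_sum fun j (_ : j ∈ univ) => hle j]

theorem dist_le (hl : SolvesComplementarity G l) (hl' : SolvesComplementarity G' l')
    (hG : ∀ j x y, y ≤ x → 0 < G j x → G j x + (x - y) ≤ G j y)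
    (hG' : ∀ j x y, y ≤ x → 0 < G' j x → G' j x + (x - y) ≤ G' j y)
    (hle : ∀ j x, G j x ≤ G' j x) (hle' : ∀ j x, G' j x ≤ G j x + c) (hc : 0 ≤ c) :
    dist l l' ≤ c := by
  have hle₀ : ∀ j x, G j x ≤ G' j x + 0 := by simpa using hle
  have hsum : ∑ i, l i ≤ ∑ i, l' i := by simpa using hl.sum_le hl' hG hle₀ le_rfl
  have hsum' : ∑ i, l' i ≤ ∑ i, l i + c := hl'.sum_le hl hG' hle' hc
  refine (dist_pi_le_iff hc).mpr fun j => ?_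
  rw [Real.dist_eq, abs_sub_le_iff]
  constructor
  · rcases lt_or_ge (l' j) (l j) with hj | hj
    · linarith [hl.sub_le_of_lt hl' hG hle₀ hj]
    · linarith
  · rcases lt_or_ge (l j) (l' j) with hj | hj
    · linarith [hl'.sub_le_of_lt hl hG' hle' hj]
    · linarith

end SolvesComplementarity

theorem exists_affine_of_eq_mul_sub_sum (c m d : ι → ℝ) (hc : ∀ i, 0 ≤ c i) :
    ∃ u v : ι → ℝ, ∀ (θ : ℝ) (l : ι → ℝ),
      (∀ j, l j = c j * (m j * θ + d j - ∑ i, l i)) → l = θ • u + v := by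
  have hK : 0 < 1 + ∑ i, c i := by linarith [sum_nonneg fun i (_ : i ∈ univ) => hc i]
  refine ⟨fun j => c j * (m j - (∑ i, c i * m i) / (1 + ∑ i, c i)),
    fun j => c j * (d j - (∑ i, c i * d i) / (1 + ∑ i, c i)), fun θ l hl => ?_⟩
  have hsum : (∑ i, l i) * (1 + ∑ i, c i) = (∑ i, c i * m i) * θ + ∑ i, c i * d i := by
    have := sum_congr rfl fun i (_ : i ∈ univ) => hl i
    simp only [mul_sub, mul_add, sum_sub_distrib, sum_add_distrib, ← sum_mul, ← mul_assoc] at this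
    linear_combination this
  have hσ : ∑ i, l i = ((∑ i, c i * m i) * θ + ∑ i, c i * d i) / (1 + ∑ i, c i) := by
    rw [eq_div_iff hK.ne', hsum]
  funext j
  rw [hl j, hσ]
  simp only [Pi.add_apply, Pi.smul_apply, smul_eq_mul]
  field_simp
  ring

end Complementarity

open Finset in
theorem sum_max_min_sub_eq {κ : Type*} [Fintype κ] [DecidableEq κ] (f : κ → ℝ) (t x : ℝ)
    {A B : Finset κ}
    (hA : ∀ k, k ∈ A ↔ x ≤ min t (f k)) (hB : ∀ k, k ∈ B ↔ t ≤ f k) :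
    ∑ k, max (min t (f k) - x) 0 = #(A ∩ B) * t + ∑ k ∈ A \ B, f k - #A * x := by
  have hmin : ∑ k ∈ A, min t (f k) = #(A ∩ B) * t + ∑ k ∈ A \ B, f k := by
    rw [← sum_inter_add_sum_sdiff A B]
    congr 1
    · rw [sum_congr rfl fun k hk => min_eq_left ((hB k).mp (mem_inter.mp hk).2), sum_const,
        nsmul_eq_mul]
    · exact sum_congr rfl fun k hk =>
        min_eq_right (not_le.mp ((not_congr (hB k)).mp (mem_sdiff.mp hk).2)).le
  calc ∑ k, max (min t (f k) - x) 0 = ∑ k ∈ A, max (min t (f k) - x) 0 :=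
        (sum_subset (subset_univ A) fun k _ hk =>
          max_eq_right (sub_nonpos.mpr (not_le.mp ((not_congr (hA k)).mp hk)).le)).symm
    _ = ∑ k ∈ A, (min t (f k) - x) :=
        sum_congr rfl fun k hk => max_eq_left (sub_nonneg.mpr ((hA k).mp hk))
    _ = #(A ∩ B) * t + ∑ k ∈ A \ B, f k - #A * x := by
        rw [sum_sub_distrib, hmin, sum_const, nsmul_eq_mul]

namespace StarSetting

open Finset

variable (S : StarSetting)

theorem η_nonneg (j : Fin S.J) : 0 ≤ S.η j := by
  have : S.C j - ∑ k, S.b j k ≤ S.v0 :=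
    (le_sup' (fun j => S.C j - ∑ k, S.b j k) (mem_univ j)).trans (le_max_right _ _)
  unfold η
  linarith

noncomputable def excess (θ : ℝ) (j : Fin S.J) (x : ℝ) : ℝ :=
  ∑ k, max (min (S.η j + θ) (S.Δ j k) - x) 0

variable {S}

theorem excess_mono {θ θ' : ℝ} (hθ : θ ≤ θ') (j : Fin S.J) (x : ℝ) :
    S.excess θ j x ≤ S.excess θ' j x := by
  unfold excess
  gcongr

theorem excess_le_add {θ θ' : ℝ} (hθ : θ ≤ θ') (j : Fin S.J) (x : ℝ) :
    S.excess θ' j x ≤ S.excess θ j x + S.n j * (θ' - θ) := by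
  have hterm : ∀ k, max (min (S.η j + θ') (S.Δ j k) - x) 0
      ≤ max (min (S.η j + θ) (S.Δ j k) - x) 0 + (θ' - θ) := fun k => by
    have : min (S.η j + θ') (S.Δ j k) ≤ min (S.η j + θ) (S.Δ j k) + (θ' - θ) :=
      min_add_add_right (S.η j + θ) (S.Δ j k) (θ' - θ) ▸
        min_le_min (by linarith) (by linarith)
    exact max_le (by linarith [le_max_left (min (S.η j + θ) (S.Δ j k) - x) 0])
      (by linarith [le_max_right (min (S.η j + θ) (S.Δ j k) - x) 0])
  calc S.excess θ' j x ≤ ∑ k, (max (min (S.η j + θ) (S.Δ j k) - x) 0 + (θ' - θ)) :=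
        sum_le_sum fun k _ => hterm k
    _ = S.excess θ j x + S.n j * (θ' - θ) := by
        rw [sum_add_distrib, sum_const, card_univ, Fintype.card_fin, nsmul_eq_mul, excess]

/-- Some summand is positive at `x`, and it decreases with slope `1` down to `y`. -/
theorem excess_add_sub_le {θ x y : ℝ} {j : Fin S.J} (hpos : 0 < S.excess θ j x) (hyx : y ≤ x) :
    S.excess θ j x + (x - y) ≤ S.excess θ j y := by
  classical
  set term : ℝ → Fin (S.n j) → ℝ := fun z k => max (min (S.η j + θ) (S.Δ j k) - z) 0
  have hanti : ∀ k, term x k ≤ term y k := fun k => max_le_max (by linarith) le_rfl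
  obtain ⟨k₀, -, hk₀⟩ : ∃ k ∈ univ, (0 : ℝ) < term x k := by
    refine exists_lt_of_sum_lt ?_
    simpa [excess] using hpos
  have hk₀' : term x k₀ + (x - y) ≤ term y k₀ := by
    have hmin : 0 < min (S.η j + θ) (S.Δ j k₀) - x := by
      by_contra! h
      simp only [term, max_eq_right h, lt_irrefl] at hk₀
    simp only [term, max_eq_left hmin.le]
    linarith [le_max_left (min (S.η j + θ) (S.Δ j k₀) - y) 0]
  calc S.excess θ j x + (x - y) = term x k₀ + (x - y) + ∑ k ∈ univ.erase k₀, term x k := by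
        rw [excess, ← add_sum_erase _ _ (mem_univ k₀)]
        ring
    _ ≤ term y k₀ + ∑ k ∈ univ.erase k₀, term y k :=
        add_le_add hk₀' (sum_le_sum fun k _ => hanti k)
    _ = S.excess θ j y := add_sum_erase _ _ (mem_univ k₀)

theorem KKT.solvesComplementarity {θ : ℝ} {p : EuclideanSpace ℝ S.Idx} {l : Fin S.J → ℝ}
    (h : S.KKT θ p l) : SolvesComplementarity (fun j x => S.excess θ j x - S.η j) l :=
  ⟨h.1, fun j => sub_le_iff_le_add.mpr (h.2.2.2.1 j),
    fun j hj => sub_eq_iff_eq_add.mpr (h.2.2.2.2 j hj).symm⟩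

theorem KKT.dist_le {θ θ' : ℝ} {p p' : EuclideanSpace ℝ S.Idx} {l l' : Fin S.J → ℝ}
    (hθ : θ ≤ θ') (h : S.KKT θ p l) (h' : S.KKT θ' p' l') :
    dist l l' ≤ (∑ j, (S.n j : ℝ)) * (θ' - θ) := by
  have hsteep : ∀ θ, ∀ j x y, y ≤ x → 0 < S.excess θ j x - S.η j →
      S.excess θ j x - S.η j + (x - y) ≤ S.excess θ j y - S.η j := fun θ j x y hyx hpos => by
    linarith [excess_add_sub_le (by linarith [S.η_nonneg j]) hyx]
  have hδ : 0 ≤ θ' - θ := sub_nonneg.mpr hθ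
  refine h.solvesComplementarity.dist_le h'.solvesComplementarity (hsteep θ) (hsteep θ')
    (fun j x => by linarith [excess_mono hθ j x]) (fun j x => ?_) (by positivity)
  have hn : (S.n j : ℝ) ≤ ∑ i, (S.n i : ℝ) :=
    single_le_sum (f := fun i => (S.n i : ℝ)) (fun i _ => by positivity) (mem_univ j)
  linarith [excess_le_add hθ j x, mul_le_mul_of_nonneg_right hn hδ]

theorem lipschitzOnWith_of_kkt {lam : ℝ → Fin S.J → ℝ}
    (hlam : ∀ θ, 0 ≤ θ → ∃ p, S.KKT θ p (lam θ)) :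
    LipschitzOnWith (∑ j, S.n j : ℕ) lam (Set.Ici 0) := by
  refine LipschitzOnWith.of_dist_le_mul fun θ hθ θ' hθ' => ?_
  wlog hle : θ ≤ θ' generalizing θ θ'
  · rw [dist_comm, dist_comm θ]
    exact this θ' hθ' θ hθ (le_of_not_ge hle)
  obtain ⟨p, hp⟩ := hlam θ hθ
  obtain ⟨p', hp'⟩ := hlam θ' hθ'
  rw [Real.dist_eq, abs_sub_comm, abs_of_nonneg (sub_nonneg.mpr hle)]
  push_cast
  exact hp.dist_le hle hp'

variable (S)

/-- On arm `j`: the items `k` with `0 < λ_j ≤ min (η_j + θ) Δ_{j,k}`, i.e. with a positive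
summand in the KKT conditions, and those with `η_j + θ ≤ Δ_{j,k}`. -/
abbrev Pattern : Type := (∀ j, Finset (Fin (S.n j))) × (∀ j, Finset (Fin (S.n j)))

/-- `(0 : ℝ)⁻¹ = 0` makes the weight vanish on arms without active items, i.e. with `λ_j = 0`. -/
noncomputable def weight (w : S.Pattern) (j : Fin S.J) : ℝ := (#(w.1 j) : ℝ)⁻¹

noncomputable def slope (w : S.Pattern) (j : Fin S.J) : ℝ := #(w.1 j ∩ w.2 j)

noncomputable def offset (w : S.Pattern) (j : Fin S.J) : ℝ :=
  ∑ k ∈ w.1 j \ w.2 j, S.Δ j k + (S.slope w j - 1) * S.η j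

variable {S}

theorem KKT.exists_pattern {θ : ℝ} {p : EuclideanSpace ℝ S.Idx} {l : Fin S.J → ℝ}
    (h : S.KKT θ p l) :
    ∃ w : S.Pattern, ∀ j, l j = S.weight w j * (S.slope w j * θ + S.offset w j - ∑ i, l i) := by
  classical
  refine ⟨(fun j => {k | 0 < l j ∧ l j ≤ min (S.η j + θ) (S.Δ j k)},
    fun j => {k | S.η j + θ ≤ S.Δ j k}), fun j => ?_⟩
  rcases (h.1 j).eq_or_lt with hj | hj
  · simp [weight, ← hj]
  set A : Finset (Fin (S.n j)) := {k | 0 < l j ∧ l j ≤ min (S.η j + θ) (S.Δ j k)}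
  have hsum := sum_max_min_sub_eq (S.Δ j) (S.η j + θ) (l j) (A := A)
    (B := {k | S.η j + θ ≤ S.Δ j k}) (fun k => by simp [A, hj]) (fun k => by simp)
  have hkkt := h.2.2.2.2 j hj
  have hle_sum : l j ≤ ∑ i, l i := single_le_sum (fun i _ => h.1 i) (mem_univ j)
  have hA : A.Nonempty := by
    rw [nonempty_iff_ne_empty]
    intro hA
    simp only [hA, empty_inter, card_empty, empty_sdiff, sum_empty, Nat.cast_zero, zero_mul,
      add_zero, sub_zero] at hsum
    linarith [S.η_nonneg j]
  have hA' : (0 : ℝ) < #A := Nat.cast_pos.mpr hA.card_pos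
  simp only [weight, slope, offset]
  field_simp
  linarith

theorem exists_finite_affine_of_kkt :
    ∃ L : Set ((Fin S.J → ℝ) × (Fin S.J → ℝ)), L.Finite ∧
      ∀ θ p l, S.KKT θ p l → ∃ uv ∈ L, l = θ • uv.1 + uv.2 := by
  choose u v huv using fun w : S.Pattern =>
    exists_affine_of_eq_mul_sub_sum (S.weight w) (S.slope w) (S.offset w) fun j => by
      unfold weight
      positivity
  refine ⟨Set.range fun w => (u w, v w), Set.finite_range _, fun θ p l h => ?_⟩
  obtain ⟨w, hw⟩ := h.exists_pattern
  exact ⟨_, ⟨w, rfl⟩, huv w θ l hw⟩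

end StarSetting

/-- the Lagrange multipliers `θ ↦ λ_{j,θ}` of the KKT conditions, and their
sum `θ ↦ σ_θ`, are piecewise linear functions on `[0,∞)`. -/
theorem kkt_multipliers_piecewise_linear (S : StarSetting)
    (lam : ℝ → Fin S.J → ℝ)
    (hlam : ∀ θ : ℝ, 0 ≤ θ → ∃ p : EuclideanSpace ℝ S.Idx, S.KKT θ p (lam θ)) :
    (∀ j, PiecewiseLinearOnIci fun θ => lam θ j) ∧
    PiecewiseLinearOnIci fun θ => ∑ j, lam θ j := by
  obtain ⟨L, hL, hlamL⟩ := S.exists_finite_affine_of_kkt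
  have hcont : ContinuousOn lam (Set.Ici 0) := (S.lipschitzOnWith_of_kkt hlam).continuousOn
  have hpwl : ∀ φ : (Fin S.J → ℝ) →L[ℝ] ℝ, PiecewiseLinearOnIci (φ ∘ lam) := fun φ =>
    .comp_of_finite_affine hcont hL (fun θ hθ => (hlam θ hθ).elim fun p hp => hlamL θ p _ hp) φ
  refine ⟨fun j => hpwl (ContinuousLinearMap.proj j), ?_⟩
  simpa [Function.comp_def] using hpwl (∑ j, ContinuousLinearMap.proj j)
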